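/- arXiv:1312.5453 — 5 statements merged into one kernel-verified Lean document; each statement's English description precedes it below -/
import Mathlib

section
/- Let f ∈ X₀(Ω) and let σ be a finite nonnegative Borel measure on Ω×S^{N−1}×[0,∞) admissible for f. Set σ₀ := σ restricted to Ω×S^{N−1}×{0}, σ₊ := σ − σ₀, and let γ₊ := π_♯σ₊ be the push-forward of σ₊ under π(x,v,t) := (x, x+tv). Then there exists a finite ℝ^N-valued Borel vector measure ν such that ∫ ψ·dν = ∫_{Ω×S^{N−1}} ψ(x)·v dσ₀(x,v,0) + ∫ (1/|y−x|) ∫₀¹ ψ(x+t(y−x))·(y−x) dt dγ₊(x,y) for every bounded continuous ψ : ℝ^N → ℝ^N. This ν satisfies −div ν = f and ‖ν‖ ≤ ‖σ‖; moreover, if σ is optimal, i.e. ‖σ‖ = W¹(f), then ‖ν‖ = W¹(f), so ν minimizes the total variation among all vector measures ν' with −div ν' = f. -/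
open MeasureTheory Filter Topology
open scoped NNReal RealInnerProductSpace

noncomputable section

/-- Euclidean space `ℝ^N`. -/
abbrev Euc (N : ℕ) := EuclideanSpace ℝ (Fin N)

/-- Test functions: `C¹` functions with compact support on `ℝ^N`. -/
def IsTest {N : ℕ} (φ : Euc N → ℝ) : Prop :=
  ContDiff ℝ 1 φ ∧ HasCompactSupport φ

/-- `L^∞(Ω)`-type supremum of a function over the set `Ω`. -/
def supOn {N : ℕ} (Ω : Set (Euc N)) (g : Euc N → ℝ) : ℝ := sSup (g '' Ω)

/-- `f ∈ X₀(Ω)`: distributions of order one with zero average, supported in `Ω`. -/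
def MemX0 {N : ℕ} (Ω : Set (Euc N)) (f : (Euc N → ℝ) →ₗ[ℝ] ℝ) : Prop :=
  (∃ C : ℝ, 0 ≤ C ∧ ∀ φ : Euc N → ℝ, IsTest φ →
      |f φ| ≤ C * (supOn Ω (fun x => |φ x|) + supOn Ω (fun x => ‖gradient φ x‖))) ∧
  ∀ φ : Euc N → ℝ, IsTest φ → (∃ c : ℝ, ∀ x ∈ Ω, φ x = c) → f φ = 0

/-- `f ∈ X₀^♯(Ω)`. -/
def MemX0sharp {N : ℕ} (Ω : Set (Euc N)) (f : (Euc N → ℝ) →ₗ[ℝ] ℝ) : Prop :=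
  MemX0 Ω f ∧ ∀ ε : ℝ, 0 < ε → ∃ C : ℝ, 0 < C ∧ ∀ φ : Euc N → ℝ, IsTest φ →
    |f φ| ≤ C * supOn Ω (fun x => |φ x|) + ε * supOn Ω (fun x => ‖gradient φ x‖)

/-- The Wasserstein norm `W¹(f)`. -/
def W1 {N : ℕ} (f : (Euc N → ℝ) →ₗ[ℝ] ℝ) : ℝ :=
  sSup {r : ℝ | ∃ φ : Euc N → ℝ, IsTest φ ∧ (∀ x, ‖gradient φ x‖ ≤ 1) ∧ r = f φ}

/-- The set `Ω × S^{N-1} × [0,∞)` inside `ℝ^N × ℝ^N × ℝ`. -/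
def SliceSet {N : ℕ} (Ω : Set (Euc N)) : Set (Euc N × Euc N × ℝ) :=
  {p | p.1 ∈ Ω ∧ ‖p.2.1‖ = 1 ∧ 0 ≤ p.2.2}

/-- The function `D_φ(x,v,t)` associated to a test function `φ`. -/
def Dtest {N : ℕ} (φ : Euc N → ℝ) (p : Euc N × Euc N × ℝ) : ℝ :=
  if p.2.2 = 0 then ⟪gradient φ p.1, p.2.1⟫
  else (φ (p.1 + p.2.2 • p.2.1) - φ p.1) / p.2.2

/-- A nonnegative finite measure `σ` on `Ω × S^{N-1} × [0,∞)` is admissible for `f` if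
`∫ D_φ dσ = ⟨f, φ⟩` for every test function `φ`. -/
def IsAdmissible {N : ℕ} (Ω : Set (Euc N)) (f : (Euc N → ℝ) →ₗ[ℝ] ℝ)
    (σ : Measure (Euc N × Euc N × ℝ)) : Prop :=
  IsFiniteMeasure σ ∧ σ (SliceSet Ω)ᶜ = 0 ∧
  ∀ φ : Euc N → ℝ, IsTest φ → ∫ p, Dtest φ p ∂σ = f φ


/-- A finite `ℝ^N`-valued vector measure, given in polar form `ν = v·|ν|` with a finite
positive base measure (the total variation) and a unit-norm density. -/
structure VecMeasure (N : ℕ) where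
  base : Measure (Euc N)
  finite : IsFiniteMeasure base
  density : Euc N → Euc N
  meas : Measurable density
  unit : ∀ᵐ x ∂base, ‖density x‖ = 1

/-- Total variation `‖ν‖` of a vector measure. -/
def VecMeasure.tv {N : ℕ} (ν : VecMeasure N) : ℝ := (ν.base Set.univ).toReal

/-- Pairing `∫ ψ · dν` of a vector measure with a vector field. -/
def VecMeasure.pairing {N : ℕ} (ν : VecMeasure N) (ψ : Euc N → Euc N) : ℝ :=
  ∫ x, ⟪ψ x, ν.density x⟫ ∂ν.base

/-- `−div ν = f`, i.e. `⟨f, φ⟩ = ∫ ∇φ · dν` for all test functions `φ`. -/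
def IsMinusDivOf {N : ℕ} (ν : VecMeasure N) (f : (Euc N → ℝ) →ₗ[ℝ] ℝ) : Prop :=
  ∀ φ : Euc N → ℝ, IsTest φ → f φ = ν.pairing (fun x => gradient φ x)


/-!
An atom of `σ` at `(x, v, 0)` is an infinitesimal dipole at `x` pointing along `v`, and an atom
at `(x, v, t)` with `t > 0` is a unit flow along the segment `[x, x + t v]`. Spreading the latter
uniformly over its segment turns `σ` into a measure `ρ` on pairs (position, unit direction) of
mass `‖σ‖`; averaging the direction over each fibre of `ρ` gives a field `w` with `|w| ≤ 1`, and
`ν := w ρ₁`, with `ρ₁` the first marginal of `ρ`, has `‖ν‖ ≤ ‖σ‖`. Tested against `∇φ`, the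
fundamental theorem of calculus along the segments turns `∫ ∇φ · dν` into `∫ D_φ dσ = ⟨f, φ⟩`.
Conversely every `ν'` with `−div ν' = f` has `‖ν'‖ ≥ W¹(f)`, pairing it with gradients bounded
by one.
-/

open scoped ENNReal

section Gradient

variable {F : Type*} [NormedAddCommGroup F] [InnerProductSpace ℝ F] [CompleteSpace F]

theorem continuous_gradient {φ : F → ℝ} (hφ : ContDiff ℝ 1 φ) : Continuous (gradient φ) :=
  (InnerProductSpace.toDual ℝ F).symm.continuous.comp (hφ.continuous_fderiv one_ne_zero)

theorem norm_gradient_le_of_lipschitzWith {φ : F → ℝ} {C : ℝ≥0} (hφ : LipschitzWith C φ)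
    (x : F) : ‖gradient φ x‖ ≤ C := by
  rw [gradient, LinearIsometryEquiv.norm_map]
  exact norm_fderiv_le_of_lipschitz ℝ hφ

theorem integral_inner_gradient_segment {φ : F → ℝ} (hφ : ContDiff ℝ 1 φ) (x y : F) :
    ∫ t in (0:ℝ)..1, ⟪gradient φ (x + t • (y - x)), y - x⟫ = φ y - φ x := by
  have hderiv : ∀ t : ℝ, HasDerivAt (fun s : ℝ => φ (x + s • (y - x)))
      ⟪gradient φ (x + t • (y - x)), y - x⟫ t := by
    intro t
    rw [inner_gradient_left]
    have hline : HasDerivAt (fun s : ℝ => x + s • (y - x)) (y - x) t := by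
      simpa using ((hasDerivAt_id t).smul_const (y - x)).const_add x
    exact ((hφ.differentiable one_ne_zero _).hasFDerivAt).comp_hasDerivAt t hline
  have hcont : Continuous fun t : ℝ => ⟪gradient φ (x + t • (y - x)), y - x⟫ :=
    ((continuous_gradient hφ).comp (by fun_prop)).inner continuous_const
  simpa using intervalIntegral.integral_eq_sub_of_hasDerivAt (fun t _ => hderiv t)
    (hcont.intervalIntegrable 0 1)

end Gradient

namespace VecMeasure

variable {N : ℕ}

theorem pairing_le_tv (ν : VecMeasure N) {ψ : Euc N → Euc N} (hψ : ∀ x, ‖ψ x‖ ≤ 1) :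
    ν.pairing ψ ≤ ν.tv := by
  have := ν.finite
  have hbound : ∀ᵐ x ∂ν.base, ‖⟪ψ x, ν.density x⟫‖ ≤ 1 := by
    filter_upwards [ν.unit] with x hx
    calc ‖⟪ψ x, ν.density x⟫‖ ≤ ‖ψ x‖ * ‖ν.density x‖ := norm_inner_le_norm _ _
      _ ≤ 1 := by rw [hx, mul_one]; exact hψ x
  calc ν.pairing ψ ≤ ‖ν.pairing ψ‖ := Real.le_norm_self _
    _ ≤ ∫ _, (1 : ℝ) ∂ν.base := norm_integral_le_of_norm_le (integrable_const 1) hbound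
    _ = ν.tv := by simp [tv, measureReal_def]

/-- The vector measure `w • μ`, written in polar form `(‖w‖ • μ, w / ‖w‖)`. -/
def ofDensity (μ : Measure (Euc N)) (w : Euc N → Euc N) (hw : Measurable w)
    (hwi : Integrable w μ) : VecMeasure N where
  base := μ.withDensity fun x => ‖w x‖ₑ
  finite := isFiniteMeasure_withDensity hwi.2.ne
  density x := ‖w x‖⁻¹ • w x
  meas := hw.norm.inv.smul hw
  unit := by
    rw [ae_withDensity_iff hw.enorm]
    exact ae_of_all _ fun x hx => norm_smul_inv_norm (by simpa using hx)

variable {μ : Measure (Euc N)} {w : Euc N → Euc N} {hw : Measurable w} {hwi : Integrable w μ}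

theorem pairing_ofDensity (ψ : Euc N → Euc N) :
    (ofDensity μ w hw hwi).pairing ψ = ∫ x, ⟪ψ x, w x⟫ ∂μ := by
  change ∫ x, ⟪ψ x, ‖w x‖⁻¹ • w x⟫ ∂(μ.withDensity fun x => ((‖w x‖₊ : ℝ≥0) : ℝ≥0∞)) = _
  rw [integral_withDensity_eq_integral_smul hw.nnnorm]
  congr with x
  rcases eq_or_ne (w x) 0 with hx | hx
  · simp [hx]
  · rw [NNReal.smul_def, coe_nnnorm, real_inner_smul_right, smul_eq_mul,
      mul_inv_cancel_left₀ (norm_ne_zero_iff.mpr hx)]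

theorem tv_ofDensity : (ofDensity μ w hw hwi).tv = ∫ x, ‖w x‖ ∂μ := by
  rw [tv, ofDensity, withDensity_apply _ MeasurableSet.univ, Measure.restrict_univ,
    integral_norm_eq_lintegral_enorm hw.aestronglyMeasurable]

end VecMeasure

section Segment

variable {E : Type*} [NormedAddCommGroup E] [InnerProductSpace ℝ E]

/-- The point at time `t` of the segment from `x` to `y`, with the unit direction of the segment
(`0` when `x = y`). -/
def segmentTangent (z : (E × E) × ℝ) : E × E :=
  (z.1.1 + z.2 • (z.1.2 - z.1.1), ‖z.1.2 - z.1.1‖⁻¹ • (z.1.2 - z.1.1))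

theorem norm_segmentTangent_snd_le_one (z : (E × E) × ℝ) : ‖(segmentTangent z).2‖ ≤ 1 := by
  rcases eq_or_ne (z.1.2 - z.1.1) 0 with h | h
  · simp [segmentTangent, h]
  · exact (norm_smul_inv_norm h).le

end Segment

section Flow

variable {α E : Type*} [MeasurableSpace α] [NormedAddCommGroup E] [InnerProductSpace ℝ E]
  [MeasurableSpace E] [BorelSpace E] [SecondCountableTopology E]

theorem measurable_segmentTangent : Measurable (segmentTangent (E := E)) := by
  unfold segmentTangent
  fun_prop

theorem integrable_inner_of_norm_snd_le_one {ρ : Measure (α × E)} [IsFiniteMeasure ρ]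
    (hρ : ∀ᵐ q ∂ρ, ‖q.2‖ ≤ 1) {ψ : α → E} (hψ : Measurable ψ) {M : ℝ} (hM : ∀ x, ‖ψ x‖ ≤ M) :
    Integrable (fun q => ⟪ψ q.1, q.2⟫) ρ := by
  refine Integrable.mono' (integrable_const M)
    ((hψ.comp measurable_fst).inner measurable_snd).aestronglyMeasurable ?_
  filter_upwards [hρ] with q hq
  calc ‖⟪ψ q.1, q.2⟫‖ ≤ ‖ψ q.1‖ * ‖q.2‖ := norm_inner_le_norm _ _
    _ ≤ M := by nlinarith [norm_nonneg (ψ q.1), norm_nonneg q.2, hM q.1]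

def segmentLift (γ : Measure (E × E)) : Measure (E × E) :=
  (γ.prod (volume.restrict (Set.Ioc (0 : ℝ) 1))).map segmentTangent

theorem segmentLift_apply_univ (γ : Measure (E × E)) : segmentLift γ Set.univ = γ Set.univ := by
  rw [segmentLift, Measure.map_apply measurable_segmentTangent MeasurableSet.univ,
    Set.preimage_univ, ← Set.univ_prod_univ, Measure.prod_prod]
  simp

instance (γ : Measure (E × E)) [IsFiniteMeasure γ] : IsFiniteMeasure (segmentLift γ) :=
  ⟨by rw [segmentLift_apply_univ]; exact measure_lt_top _ _⟩

theorem ae_norm_snd_le_one_segmentLift (γ : Measure (E × E)) :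
    ∀ᵐ q ∂segmentLift γ, ‖q.2‖ ≤ 1 :=
  (ae_map_iff measurable_segmentTangent.aemeasurable (measurable_snd.norm measurableSet_Iic)).2
    (ae_of_all _ norm_segmentTangent_snd_le_one)

theorem integral_inner_segmentLift (γ : Measure (E × E)) [IsFiniteMeasure γ] {ψ : E → E}
    (hψ : Measurable ψ) {M : ℝ} (hM : ∀ x, ‖ψ x‖ ≤ M) :
    ∫ q, ⟪ψ q.1, q.2⟫ ∂segmentLift γ =
      ∫ q : E × E, ((1 / ‖q.2 - q.1‖) *
        ∫ t in (0:ℝ)..1, ⟪ψ (q.1 + t • (q.2 - q.1)), q.2 - q.1⟫) ∂γ := by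
  have hint := integrable_inner_of_norm_snd_le_one (ae_norm_snd_le_one_segmentLift γ) hψ hM
  have hint' : Integrable (fun z => ⟪ψ (segmentTangent z).1, (segmentTangent z).2⟫)
      (γ.prod (volume.restrict (Set.Ioc (0 : ℝ) 1))) :=
    (integrable_map_measure hint.aestronglyMeasurable
      measurable_segmentTangent.aemeasurable).1 hint
  rw [segmentLift, integral_map measurable_segmentTangent.aemeasurable
    hint.aestronglyMeasurable, integral_prod _ hint']
  refine integral_congr_ae (ae_of_all _ fun q => ?_)
  simp only [segmentTangent, real_inner_smul_right, integral_const_mul, one_div,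
    intervalIntegral.integral_of_le zero_le_one]

def flowMeasure (σ : Measure (E × E × ℝ)) : Measure (E × E) :=
  (σ.restrict {p | p.2.2 = 0}).map (fun p => (p.1, p.2.1)) +
    segmentLift ((σ.restrict {p | p.2.2 ≠ 0}).map fun p => (p.1, p.1 + p.2.2 • p.2.1))

variable {σ : Measure (E × E × ℝ)}

theorem flowMeasure_apply_univ : flowMeasure σ Set.univ = σ Set.univ := by
  rw [flowMeasure, Measure.add_apply, Measure.map_apply (by fun_prop) MeasurableSet.univ,
    segmentLift_apply_univ, Measure.map_apply (by fun_prop) MeasurableSet.univ,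
    Set.preimage_univ, Set.preimage_univ, Measure.restrict_apply_univ,
    Measure.restrict_apply_univ]
  exact measure_add_measure_compl (measurable_snd.snd (measurableSet_singleton 0))

instance [IsFiniteMeasure σ] : IsFiniteMeasure (flowMeasure σ) :=
  ⟨by rw [flowMeasure_apply_univ]; exact measure_lt_top _ _⟩

theorem ae_norm_snd_le_one_flowMeasure (hσ : ∀ᵐ p ∂σ, ‖p.2.1‖ ≤ 1) :
    ∀ᵐ q ∂flowMeasure σ, ‖q.2‖ ≤ 1 :=
  ae_add_measure_iff.2
    ⟨(ae_map_iff (by fun_prop) (measurable_snd.norm measurableSet_Iic)).2 (ae_restrict_of_ae hσ),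
      ae_norm_snd_le_one_segmentLift _⟩

theorem integral_inner_flowMeasure [IsFiniteMeasure σ] (hσ : ∀ᵐ p ∂σ, ‖p.2.1‖ ≤ 1)
    {ψ : E → E} (hψ : Measurable ψ) {M : ℝ} (hM : ∀ x, ‖ψ x‖ ≤ M) :
    ∫ q, ⟪ψ q.1, q.2⟫ ∂flowMeasure σ =
      (∫ p, ⟪ψ p.1, p.2.1⟫ ∂(σ.restrict {p : E × E × ℝ | p.2.2 = 0})) +
        ∫ q : E × E, ((1 / ‖q.2 - q.1‖) *
            ∫ t in (0:ℝ)..1, ⟪ψ (q.1 + t • (q.2 - q.1)), q.2 - q.1⟫)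
          ∂((σ.restrict {p : E × E × ℝ | p.2.2 ≠ 0}).map
              (fun p : E × E × ℝ => (p.1, p.1 + p.2.2 • p.2.1))) := by
  obtain ⟨h0, h1⟩ := ae_add_measure_iff.1 (ae_norm_snd_le_one_flowMeasure hσ)
  rw [flowMeasure, integral_add_measure (integrable_inner_of_norm_snd_le_one h0 hψ hM)
    (integrable_inner_of_norm_snd_le_one h1 hψ hM), integral_inner_segmentLift _ hψ hM,
    integral_map (f := fun q : E × E => ⟪ψ q.1, q.2⟫) (by fun_prop)
      ((hψ.comp measurable_fst).inner measurable_snd).aestronglyMeasurable]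

end Flow

theorem exists_vecMeasure_pairing_eq_integral {N : ℕ} (ρ : Measure (Euc N × Euc N))
    [IsFiniteMeasure ρ] (hρ : ∀ᵐ q ∂ρ, ‖q.2‖ ≤ 1) :
    ∃ ν : VecMeasure N, ν.tv ≤ (ρ Set.univ).toReal ∧
      ∀ ψ : Euc N → Euc N, Measurable ψ → (∃ M : ℝ, ∀ x, ‖ψ x‖ ≤ M) →
        ν.pairing ψ = ∫ q, ⟪ψ q.1, q.2⟫ ∂ρ := by
  have hfibre : ∀ᵐ x ∂ρ.fst, ∀ᵐ u ∂ρ.condKernel x, ‖u‖ ≤ 1 :=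
    Measure.ae_ae_of_ae_compProd (by rwa [ρ.disintegrate ρ.condKernel])
  have hfibre_int : ∀ᵐ x ∂ρ.fst, Integrable id (ρ.condKernel x) := by
    filter_upwards [hfibre] with x hx
    exact Integrable.mono' (integrable_const 1) aestronglyMeasurable_id hx
  set w : Euc N → Euc N := fun x => ∫ u, u ∂ρ.condKernel x
  have hw : Measurable w :=
    measurable_snd.stronglyMeasurable.integral_kernel_prod_right'.measurable
  have hw1 : ∀ᵐ x ∂ρ.fst, ‖w x‖ ≤ 1 := by
    filter_upwards [hfibre] with x hx
    simpa using norm_integral_le_of_norm_le (integrable_const (1 : ℝ)) hx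
  have hwi : Integrable w ρ.fst :=
    Integrable.mono' (integrable_const 1) hw.aestronglyMeasurable hw1
  refine ⟨.ofDensity ρ.fst w hw hwi, ?_, fun ψ hψ ⟨M, hM⟩ => ?_⟩
  · rw [VecMeasure.tv_ofDensity, ← Measure.fst_univ]
    calc ∫ x, ‖w x‖ ∂ρ.fst ≤ ∫ _, (1 : ℝ) ∂ρ.fst :=
          integral_mono_ae hwi.norm (integrable_const 1) hw1
      _ = _ := by simp [measureReal_def]
  · rw [VecMeasure.pairing_ofDensity]
    conv_rhs => rw [← ρ.disintegrate ρ.condKernel]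
    rw [Measure.integral_compProd (by
      rw [ρ.disintegrate ρ.condKernel]
      exact integrable_inner_of_norm_snd_le_one hρ hψ hM)]
    refine integral_congr_ae ?_
    filter_upwards [hfibre_int] with x hx
    exact (integral_inner hx (ψ x)).symm

section Dtest

variable {N : ℕ} {φ : Euc N → ℝ}

theorem abs_Dtest_le {C : ℝ≥0} (hφ : LipschitzWith C φ) {p : Euc N × Euc N × ℝ}
    (hp : ‖p.2.1‖ ≤ 1) : |Dtest φ p| ≤ C := by
  rw [Dtest]
  split_ifs with ht
  · calc |⟪gradient φ p.1, p.2.1⟫| ≤ ‖gradient φ p.1‖ * ‖p.2.1‖ := abs_real_inner_le_norm _ _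
      _ ≤ C * 1 := by gcongr; exact norm_gradient_le_of_lipschitzWith hφ _
      _ = C := mul_one _
  · rw [abs_div, div_le_iff₀ (abs_pos.2 ht)]
    calc |φ (p.1 + p.2.2 • p.2.1) - φ p.1| ≤ C * ‖p.2.2 • p.2.1‖ := by
          simpa [dist_eq_norm, Real.dist_eq] using hφ.dist_le_mul (p.1 + p.2.2 • p.2.1) p.1
      _ ≤ C * |p.2.2| := by
          rw [norm_smul, Real.norm_eq_abs]
          gcongr
          exact mul_le_of_le_one_right (abs_nonneg _) hp

theorem integrable_Dtest {C : ℝ≥0} (hφ : LipschitzWith C φ) {σ : Measure (Euc N × Euc N × ℝ)}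
    [IsFiniteMeasure σ] (hσ : ∀ᵐ p ∂σ, ‖p.2.1‖ ≤ 1) : Integrable (Dtest φ) σ := by
  have hmeas : Measurable (Dtest φ) := by
    have := hφ.continuous.measurable
    unfold Dtest gradient
    exact Measurable.ite (measurable_snd.snd (measurableSet_singleton 0)) (by fun_prop)
      (by fun_prop)
  refine Integrable.mono' (integrable_const (C : ℝ)) hmeas.aestronglyMeasurable ?_
  filter_upwards [hσ] with p hp
  exact abs_Dtest_le hφ hp

theorem integral_Dtest_eq_integral_flowMeasure {σ : Measure (Euc N × Euc N × ℝ)}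
    [IsFiniteMeasure σ] (hσ : ∀ᵐ p ∂σ, ‖p.2.1‖ = 1 ∧ 0 ≤ p.2.2) (hφ : IsTest φ) :
    ∫ p, Dtest φ p ∂σ = ∫ q, ⟪gradient φ q.1, q.2⟫ ∂flowMeasure σ := by
  obtain ⟨C, hC⟩ := hφ.1.lipschitzWith_of_hasCompactSupport hφ.2 one_ne_zero
  have hZ : MeasurableSet {p : Euc N × Euc N × ℝ | p.2.2 = 0} :=
    measurable_snd.snd (measurableSet_singleton 0)
  have := hφ.1.continuous.measurable
  rw [integral_inner_flowMeasure (hσ.mono fun p hp => hp.1.le)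
    (continuous_gradient hφ.1).measurable (norm_gradient_le_of_lipschitzWith hC)]
  simp_rw [integral_inner_gradient_segment hφ.1]
  rw [← integral_add_compl hZ (integrable_Dtest hC (hσ.mono fun p hp => hp.1.le)),
    integral_map (by fun_prop) (by fun_prop)]
  congr 1
  · exact setIntegral_congr_fun hZ fun p hp => if_pos hp
  · refine setIntegral_congr_ae hZ.compl ?_
    filter_upwards [hσ] with p ⟨hv, ht⟩ ht0
    rw [Dtest, if_neg (show p.2.2 ≠ 0 from ht0), add_sub_cancel_left, norm_smul, hv, mul_one,
      Real.norm_eq_abs, abs_of_nonneg ht, one_div_mul_eq_div]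

end Dtest

theorem W1_le_tv {N : ℕ} {f : (Euc N → ℝ) →ₗ[ℝ] ℝ} {ν : VecMeasure N} (hν : IsMinusDivOf ν f) :
    W1 f ≤ ν.tv := by
  refine csSup_le ⟨0, 0, ⟨contDiff_const, HasCompactSupport.zero⟩, fun x => ?_,
    (map_zero f).symm⟩ ?_
  · simp [gradient]
  · rintro r ⟨φ, hφ, hgrad, rfl⟩
    rw [hν φ hφ]
    exact ν.pairing_le_tv hgrad

theorem statement1_general {N : ℕ} (Ω : Set (Euc N))
    (f : (Euc N → ℝ) →ₗ[ℝ] ℝ)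
    (σ : Measure (Euc N × Euc N × ℝ)) (hσ : IsAdmissible Ω f σ) :
    ∃ ν : VecMeasure N,
      (∀ ψ : Euc N → Euc N, Continuous ψ → (∃ M : ℝ, ∀ x, ‖ψ x‖ ≤ M) →
        ν.pairing ψ =
          (∫ p, ⟪ψ p.1, p.2.1⟫ ∂(σ.restrict {p : Euc N × Euc N × ℝ | p.2.2 = 0})) +
          ∫ q : Euc N × Euc N, ((1 / ‖q.2 - q.1‖) *
              ∫ t in (0:ℝ)..1, ⟪ψ (q.1 + t • (q.2 - q.1)), q.2 - q.1⟫)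
            ∂((σ.restrict {p : Euc N × Euc N × ℝ | p.2.2 ≠ 0}).map
                (fun p : Euc N × Euc N × ℝ => (p.1, p.1 + p.2.2 • p.2.1)))) ∧
      IsMinusDivOf ν f ∧
      ν.tv ≤ (σ Set.univ).toReal ∧
      ((σ Set.univ).toReal = W1 f →
        ν.tv = W1 f ∧ ∀ ν' : VecMeasure N, IsMinusDivOf ν' f → ν.tv ≤ ν'.tv) := by
  obtain ⟨hfin, hnull, hadm⟩ := hσ
  have hslice : ∀ᵐ p ∂σ, ‖p.2.1‖ = 1 ∧ 0 ≤ p.2.2 :=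
    (measure_eq_zero_iff_ae_notMem.1 hnull).mono fun _ hp => (not_not.1 hp).2
  have hunit : ∀ᵐ p ∂σ, ‖p.2.1‖ ≤ 1 := hslice.mono fun p hp => hp.1.le
  obtain ⟨ν, htv, hpair⟩ :=
    exists_vecMeasure_pairing_eq_integral (flowMeasure σ) (ae_norm_snd_le_one_flowMeasure hunit)
  have hdiv : IsMinusDivOf ν f := fun φ hφ => by
    obtain ⟨C, hC⟩ := hφ.1.lipschitzWith_of_hasCompactSupport hφ.2 one_ne_zero
    rw [← hadm φ hφ, integral_Dtest_eq_integral_flowMeasure hslice hφ,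
      hpair _ (continuous_gradient hφ.1).measurable ⟨C, norm_gradient_le_of_lipschitzWith hC⟩]
  have hmass : ν.tv ≤ (σ Set.univ).toReal := flowMeasure_apply_univ (σ := σ) ▸ htv
  refine ⟨ν, fun ψ hψ ⟨M, hM⟩ => ?_, hdiv, hmass, fun hopt => ?_⟩
  · rw [hpair ψ hψ.measurable ⟨M, hM⟩, integral_inner_flowMeasure hunit hψ.measurable hM]
  · have hν : ν.tv = W1 f := le_antisymm (hopt ▸ hmass) (W1_le_tv hdiv)
    exact ⟨hν, fun ν' hν' => hν ▸ W1_le_tv hν'⟩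

/-- From any admissible `σ` one constructs a vector measure
`ν = ν₀ + ν₊` (here described through its action on bounded continuous vector fields),
with `−div ν = f`, `‖ν‖ ≤ ‖σ‖`, and if `σ` is optimal (`‖σ‖ = W¹(f)`) then
`‖ν‖ = W¹(f)` and `ν` minimizes the total variation among vector measures `ν'` with
`−div ν' = f`. -/
theorem statement1 {N : ℕ} (Ω : Set (Euc N)) (hΩconv : Convex ℝ Ω) (hΩcomp : IsCompact Ω)
    (f : (Euc N → ℝ) →ₗ[ℝ] ℝ) (hf : MemX0 Ω f)
    (σ : Measure (Euc N × Euc N × ℝ)) (hσ : IsAdmissible Ω f σ) :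
    ∃ ν : VecMeasure N,
      (∀ ψ : Euc N → Euc N, Continuous ψ → (∃ M : ℝ, ∀ x, ‖ψ x‖ ≤ M) →
        ν.pairing ψ =
          (∫ p, ⟪ψ p.1, p.2.1⟫ ∂(σ.restrict {p : Euc N × Euc N × ℝ | p.2.2 = 0})) +
          ∫ q : Euc N × Euc N, ((1 / ‖q.2 - q.1‖) *
              ∫ t in (0:ℝ)..1, ⟪ψ (q.1 + t • (q.2 - q.1)), q.2 - q.1⟫)
            ∂((σ.restrict {p : Euc N × Euc N × ℝ | p.2.2 ≠ 0}).map
                (fun p : Euc N × Euc N × ℝ => (p.1, p.1 + p.2.2 • p.2.1)))) ∧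
      IsMinusDivOf ν f ∧
      ν.tv ≤ (σ Set.univ).toReal ∧
      ((σ Set.univ).toReal = W1 f →
        ν.tv = W1 f ∧ ∀ ν' : VecMeasure N, IsMinusDivOf ν' f → ν.tv ≤ ν'.tv) :=
  statement1_general Ω f σ hσ
end
end

section
/- Let f ∈ X₀^♯(Ω). For every 1-Lipschitz function u : Ω → ℝ and every sequence φ_n ∈ C¹_c(ℝ^N) with ‖∇φ_n‖_{L∞} ≤ 1 converging uniformly on Ω to u, the limit lim_n ⟨f,φ_n⟩ exists and depends only on u (not on the approximating sequence); denoting this limit by ⟨f,u⟩, the supremum of ⟨f,u⟩ over all 1-Lipschitz functions u on Ω is attained by some 1-Lipschitz u and equals W¹(f) = sup{⟨f,φ⟩ : φ ∈ C¹_c(ℝ^N), ‖∇φ‖_{L∞} ≤ 1}. -/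
open MeasureTheory Filter Topology
open scoped NNReal RealInnerProductSpace

noncomputable section

/-! The `X₀^♯` estimate `|⟨f, φ⟩| ≤ C_ε ‖φ‖_{L∞(Ω)} + ε ‖∇φ‖_{L∞(Ω)}` makes `f` continuous for
uniform convergence on `Ω` among test functions with bounded gradient on `Ω`, so `⟨f, φ_n⟩` is
Cauchy along every approximating sequence of `u`, with a limit independent of the sequence.
For attainment take a maximising sequence for `W¹(f)`. Since `f` kills functions constant on `Ω`,
subtracting `φ_n(x₀)` times a cutoff equal to `1` near `Ω` keeps `⟨f, φ_n⟩` and makes the sequence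
bounded by `diam Ω` and 1-Lipschitz on `Ω`; by Arzelà–Ascoli a subsequence converges uniformly on
`Ω`, and its limit is the maximiser. -/

section Gradient

variable {E : Type*} [NormedAddCommGroup E] [InnerProductSpace ℝ E] [CompleteSpace E]
  {φ ψ : E → ℝ} {x : E}

theorem norm_gradient_eq_norm_fderiv : ‖gradient φ x‖ = ‖fderiv ℝ φ x‖ :=
  (InnerProductSpace.toDual ℝ E).symm.norm_map _

theorem gradient_sub (hφ : DifferentiableAt ℝ φ x) (hψ : DifferentiableAt ℝ ψ x) :
    gradient (φ - ψ) x = gradient φ x - gradient ψ x := by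
  simp only [gradient, fderiv_sub hφ hψ, map_sub]

theorem gradient_sub_const (c : ℝ) : gradient (fun y => φ y - c) x = gradient φ x := by
  simp only [gradient, fderiv_sub_const]

theorem lipschitzWith_of_norm_gradient_le (hφ : Differentiable ℝ φ) {C : ℝ≥0}
    (h : ∀ x, ‖gradient φ x‖ ≤ C) : LipschitzWith C φ :=
  lipschitzWith_of_nnnorm_fderiv_le hφ fun x => by
    rw [← NNReal.coe_le_coe, coe_nnnorm, ← norm_gradient_eq_norm_fderiv]; exact h x

end Gradient

open scoped BoundedContinuousFunction in
theorem exists_subseq_tendstoUniformlyOn_of_lipschitzOnWith {X : Type*} [PseudoMetricSpace X]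
    {Ω : Set X} (hΩ : IsCompact Ω) {K : ℝ≥0} {D : ℝ} {g : ℕ → X → ℝ}
    (hlip : ∀ k, LipschitzOnWith K (g k) Ω) (hbd : ∀ k, ∀ x ∈ Ω, |g k x| ≤ D) :
    ∃ (u : X → ℝ) (σ : ℕ → ℕ), StrictMono σ ∧ LipschitzOnWith K u Ω ∧
      TendstoUniformlyOn (fun j => g (σ j)) u atTop Ω := by
  classical
  have : CompactSpace Ω := isCompact_iff_compactSpace.1 hΩ
  let A : Set (Ω →ᵇ ℝ) := {h | LipschitzWith K h ∧ ∀ x, h x ∈ Set.Icc (-D) D}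
  have hA_closed : IsClosed A := by
    simp only [A, Set.ofPred_and, Set.ofPred_forall, lipschitzWith_iff_dist_le_mul]
    exact (isClosed_iInter fun x => isClosed_iInter fun y => isClosed_le
      ((continuous_eval_const x).dist (continuous_eval_const y)) continuous_const).inter
      (isClosed_iInter fun x => isClosed_Icc.preimage (continuous_eval_const x))
  have hA_compact : IsCompact A :=
    BoundedContinuousFunction.arzela_ascoli₂ _ isCompact_Icc A hA_closed (fun _ x h => h.2 x)
      (LipschitzWith.uniformEquicontinuous (fun h : A => ⇑h.1) K (fun h => h.2.1)).equicontinuous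
  let G (k : ℕ) : Ω →ᵇ ℝ :=
    .mkOfCompact ⟨fun x => g k x, (hlip k).to_restrict.continuous⟩
  have hG : ∀ k, G k ∈ A := fun k =>
    ⟨(hlip k).to_restrict, fun x => abs_le.1 (hbd k x x.2)⟩
  obtain ⟨v, hvA, σ, hσ, hv⟩ := hA_compact.tendsto_subseq hG
  refine ⟨fun x => if hx : x ∈ Ω then v ⟨x, hx⟩ else 0, σ, hσ, ?_, ?_⟩
  · rw [lipschitzOnWith_iff_restrict]
    convert hvA.1 using 1
    ext x
    simp
  · rw [tendstoUniformlyOn_iff_tendstoUniformly_comp_coe]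
    convert BoundedContinuousFunction.tendsto_iff_tendstoUniformly.1 hv using 1
    · ext j x
      rfl
    · ext x
      simp

section

variable {N : ℕ} {Ω : Set (Euc N)} {f : (Euc N → ℝ) →ₗ[ℝ] ℝ}

theorem supOn_le {g : Euc N → ℝ} {b : ℝ} (hb : 0 ≤ b) (h : ∀ x ∈ Ω, g x ≤ b) :
    supOn Ω g ≤ b :=
  Real.sSup_le (by rintro _ ⟨x, hx, rfl⟩; exact h x hx) hb

theorem IsTest.sub {φ ψ : Euc N → ℝ} (hφ : IsTest φ) (hψ : IsTest ψ) : IsTest (φ - ψ) :=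
  ⟨hφ.1.sub hψ.1, hφ.2.sub hψ.2⟩

theorem IsTest.const_smul {φ : Euc N → ℝ} (c : ℝ) (hφ : IsTest φ) : IsTest (c • φ) :=
  ⟨hφ.1.const_smul c, hφ.2.smul_left⟩

theorem isTest_zero : IsTest (0 : Euc N → ℝ) :=
  ⟨contDiff_const, HasCompactSupport.zero⟩

theorem exists_isTest_eventuallyEq_one (hΩ : Bornology.IsBounded Ω) :
    ∃ θ : Euc N → ℝ, IsTest θ ∧ ∀ x ∈ Ω, θ =ᶠ[𝓝 x] 1 := by
  obtain ⟨R, hR, hΩR⟩ := hΩ.subset_ball_lt 0 0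
  let θ : ContDiffBump (0 : Euc N) := ⟨R, 2 * R, hR, by linarith⟩
  refine ⟨θ, ⟨θ.contDiff, θ.hasCompactSupport⟩, fun x hx => ?_⟩
  filter_upwards [Metric.isOpen_ball.mem_nhds (hΩR hx)] with y hy
  exact θ.one_of_mem_closedBall (Metric.ball_subset_closedBall hy)

theorem MemX0sharp.tendsto_apply_zero {ι : Type*} {l : Filter ι} {χ : ι → Euc N → ℝ} {M : ℝ}
    (hf : MemX0sharp Ω f) (hχ : ∀ i, IsTest (χ i))
    (hgrad : ∀ i, ∀ x ∈ Ω, ‖gradient (χ i) x‖ ≤ M) (hlim : TendstoUniformlyOn χ 0 l Ω) :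
    Tendsto (fun i => f (χ i)) l (𝓝 0) := by
  rw [Metric.tendsto_nhds]
  intro ε hε
  obtain ⟨C, hC, hbound⟩ := hf.2 (ε / (2 * (|M| + 1))) (by positivity)
  filter_upwards [Metric.tendstoUniformlyOn_iff.1 hlim (ε / (2 * C)) (by positivity)] with i hi
  have hsup : supOn Ω (fun x => |χ i x|) ≤ ε / (2 * C) :=
    supOn_le (by positivity) fun x hx => by simpa using (hi x hx).le
  have hsup_grad : supOn Ω (fun x => ‖gradient (χ i) x‖) ≤ |M| :=
    supOn_le (abs_nonneg M) fun x hx => (hgrad i x hx).trans (le_abs_self M)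
  have hM : ε / (2 * (|M| + 1)) * |M| < ε / 2 := by
    rw [div_mul_eq_mul_div, div_lt_div_iff₀ (by positivity) two_pos]
    nlinarith [abs_nonneg M]
  rw [Real.dist_eq, sub_zero]
  calc |f (χ i)| ≤ C * (ε / (2 * C)) + ε / (2 * (|M| + 1)) * |M| :=
        (hbound _ (hχ i)).trans (by gcongr)
    _ < ε := by
      have : C * (ε / (2 * C)) = ε / 2 := by field_simp
      linarith

/-- The gradient bound is only asked on `Ω`: the normalised maximising sequences built in
`MemX0.exists_isLipApprox_tendsto_W1` need not satisfy it elsewhere. -/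
structure IsLipApprox (Ω : Set (Euc N)) (u : Euc N → ℝ) (φ : ℕ → Euc N → ℝ) : Prop where
  isTest : ∀ n, IsTest (φ n)
  norm_gradient_le : ∀ n, ∀ x ∈ Ω, ‖gradient (φ n) x‖ ≤ 1
  tendstoUniformlyOn : TendstoUniformlyOn φ u atTop Ω

theorem MemX0sharp.tendsto_apply_sub {ι : Type*} {l : Filter ι} {φ ψ : ι → Euc N → ℝ}
    (hf : MemX0sharp Ω f) (hφ : ∀ i, IsTest (φ i)) (hψ : ∀ i, IsTest (ψ i))
    (hφ_grad : ∀ i, ∀ x ∈ Ω, ‖gradient (φ i) x‖ ≤ 1)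
    (hψ_grad : ∀ i, ∀ x ∈ Ω, ‖gradient (ψ i) x‖ ≤ 1)
    (hlim : TendstoUniformlyOn (fun i => φ i - ψ i) 0 l Ω) :
    Tendsto (fun i => f (φ i) - f (ψ i)) l (𝓝 0) := by
  have hgrad : ∀ i, ∀ x ∈ Ω, ‖gradient (φ i - ψ i) x‖ ≤ 2 := fun i x hx => by
    rw [gradient_sub ((hφ i).1.differentiable one_ne_zero x)
      ((hψ i).1.differentiable one_ne_zero x)]
    linarith [norm_sub_le (gradient (φ i) x) (gradient (ψ i) x), hφ_grad i x hx, hψ_grad i x hx]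
  simpa only [map_sub] using
    hf.tendsto_apply_zero (fun i => (hφ i).sub (hψ i)) hgrad hlim

theorem IsLipApprox.tendsto_apply_sub (hf : MemX0sharp Ω f) {u : Euc N → ℝ}
    {φ ψ : ℕ → Euc N → ℝ} (hφ : IsLipApprox Ω u φ) (hψ : IsLipApprox Ω u ψ) :
    Tendsto (fun n => f (φ n) - f (ψ n)) atTop (𝓝 0) :=
  hf.tendsto_apply_sub hφ.isTest hψ.isTest hφ.norm_gradient_le hψ.norm_gradient_le <| by
    have := hφ.tendstoUniformlyOn.sub hψ.tendstoUniformlyOn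
    rwa [sub_self] at this

theorem IsLipApprox.cauchySeq (hf : MemX0sharp Ω f) {u : Euc N → ℝ} {φ : ℕ → Euc N → ℝ}
    (hφ : IsLipApprox Ω u φ) : CauchySeq fun n => f (φ n) := by
  refine (IsUniformAddGroup.cauchy_map_iff_tendsto_swapped _ _).2 ⟨atTop_neBot, ?_⟩
  refine hf.tendsto_apply_sub (fun p => hφ.isTest p.2) (fun p => hφ.isTest p.1)
    (fun p => hφ.norm_gradient_le p.2) (fun p => hφ.norm_gradient_le p.1) ?_
  have := SeminormedAddGroup.uniformCauchySeqOn_iff_tendstoUniformlyOn_zero.1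
    hφ.tendstoUniformlyOn.uniformCauchySeqOn
  simp only [neg_add_eq_sub] at this
  exact this

theorem IsLipApprox.exists_tendsto (hf : MemX0sharp Ω f) {u : Euc N → ℝ} {φ : ℕ → Euc N → ℝ}
    (hφ : IsLipApprox Ω u φ) : ∃ r, Tendsto (fun n => f (φ n)) atTop (𝓝 r) :=
  cauchySeq_tendsto_of_complete (hφ.cauchySeq hf)

theorem MemX0.exists_abs_le_diam_of_lipschitzOnWith (hf : MemX0 Ω f)
    (hΩ : Bornology.IsBounded Ω) {φ : Euc N → ℝ} (hφ : IsTest φ) (hlip : LipschitzOnWith 1 φ Ω) :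
    ∃ ψ : Euc N → ℝ, IsTest ψ ∧ f ψ = f φ ∧ (∀ x ∈ Ω, gradient ψ x = gradient φ x) ∧
      LipschitzOnWith 1 ψ Ω ∧ ∀ x ∈ Ω, |ψ x| ≤ Metric.diam Ω := by
  rcases Ω.eq_empty_or_nonempty with rfl | ⟨x₀, hx₀⟩
  · exact ⟨φ, hφ, rfl, by simp, by simp, by simp⟩
  obtain ⟨θ, hθ, hθ_one⟩ := exists_isTest_eventuallyEq_one hΩ
  have hψ_loc : ∀ x ∈ Ω, φ - φ x₀ • θ =ᶠ[𝓝 x] fun y => φ y - φ x₀ := fun x hx => by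
    filter_upwards [hθ_one x hx] with y hy
    simp [hy]
  have hψ_eq : Set.EqOn (φ - φ x₀ • θ) (fun y => φ y - φ x₀) Ω := fun x hx =>
    (hψ_loc x hx).eq_of_nhds
  have hfθ : f θ = 0 := hf.2 θ hθ ⟨1, fun x hx => (hθ_one x hx).eq_of_nhds⟩
  refine ⟨φ - φ x₀ • θ, hφ.sub (hθ.const_smul _), by simp [hfθ],
    fun x hx => (hψ_loc x hx).gradient_eq.trans (gradient_sub_const _), ?_, fun x hx => ?_⟩
  · refine LipschitzOnWith.of_dist_le_mul fun x hx y hy => ?_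
    rw [hψ_eq hx, hψ_eq hy, dist_sub_right]
    exact hlip.dist_le_mul x hx y hy
  · rw [hψ_eq hx]
    exact (hlip.dist_le_mul x hx x₀ hx₀).trans (by simpa using Metric.dist_le_diam_of_mem hΩ hx hx₀)

theorem MemX0.bddAbove_W1 (hf : MemX0 Ω f) (hΩ : Bornology.IsBounded Ω) :
    BddAbove {r : ℝ | ∃ φ : Euc N → ℝ, IsTest φ ∧ (∀ x, ‖gradient φ x‖ ≤ 1) ∧ r = f φ} := by
  obtain ⟨C, hC, hbound⟩ := hf.1
  refine ⟨C * (Metric.diam Ω + 1), ?_⟩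
  rintro _ ⟨φ, hφ, hgrad, rfl⟩
  have hlip := lipschitzWith_of_norm_gradient_le (hφ.1.differentiable one_ne_zero)
    (C := 1) (by simpa using hgrad)
  obtain ⟨ψ, hψ, hfψ, hψ_grad, -, hψ_le⟩ :=
    hf.exists_abs_le_diam_of_lipschitzOnWith hΩ hφ hlip.lipschitzOnWith
  have hsup : supOn Ω (fun x => |ψ x|) ≤ Metric.diam Ω := supOn_le Metric.diam_nonneg hψ_le
  have hsup_grad : supOn Ω (fun x => ‖gradient ψ x‖) ≤ 1 :=
    supOn_le zero_le_one fun x hx => hψ_grad x hx ▸ hgrad x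
  calc f φ = f ψ := hfψ.symm
    _ ≤ |f ψ| := le_abs_self _
    _ ≤ C * (Metric.diam Ω + 1) := (hbound ψ hψ).trans (by gcongr)

theorem MemX0.apply_le_W1 (hf : MemX0 Ω f) (hΩ : Bornology.IsBounded Ω) {φ : Euc N → ℝ}
    (hφ : IsTest φ) (hgrad : ∀ x, ‖gradient φ x‖ ≤ 1) : f φ ≤ W1 f :=
  le_csSup (hf.bddAbove_W1 hΩ) ⟨φ, hφ, hgrad, rfl⟩

theorem MemX0.exists_seq_tendsto_W1 (hf : MemX0 Ω f) (hΩ : Bornology.IsBounded Ω) :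
    ∃ φ : ℕ → Euc N → ℝ, (∀ n, IsTest (φ n)) ∧ (∀ n x, ‖gradient (φ n) x‖ ≤ 1) ∧
      Tendsto (fun n => f (φ n)) atTop (𝓝 (W1 f)) := by
  have hne : {r : ℝ | ∃ φ : Euc N → ℝ, IsTest φ ∧ (∀ x, ‖gradient φ x‖ ≤ 1) ∧ r = f φ}.Nonempty :=
    ⟨0, 0, isTest_zero, fun x => by simp [Pi.zero_def, gradient_fun_const], (map_zero f).symm⟩
  obtain ⟨r, -, hr, hr_mem⟩ := exists_seq_tendsto_sSup hne (hf.bddAbove_W1 hΩ)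
  choose φ hφ hgrad hφr using hr_mem
  rw [funext hφr] at hr
  exact ⟨φ, hφ, hgrad, hr⟩

theorem MemX0.exists_isLipApprox_tendsto_W1 (hf : MemX0 Ω f) (hΩ : IsCompact Ω) :
    ∃ (u : Euc N → ℝ) (φ : ℕ → Euc N → ℝ), LipschitzOnWith 1 u Ω ∧ IsLipApprox Ω u φ ∧
      Tendsto (fun n => f (φ n)) atTop (𝓝 (W1 f)) := by
  obtain ⟨φ, hφ, hgrad, hlim⟩ := hf.exists_seq_tendsto_W1 hΩ.isBounded
  have hlip n : LipschitzWith 1 (φ n) :=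
    lipschitzWith_of_norm_gradient_le ((hφ n).1.differentiable one_ne_zero) (by simpa using hgrad n)
  choose ψ hψ hfψ hψ_grad hψ_lip hψ_le using fun n =>
    hf.exists_abs_le_diam_of_lipschitzOnWith hΩ.isBounded (hφ n) (hlip n).lipschitzOnWith
  obtain ⟨u, σ, hσ, hu, hψu⟩ := exists_subseq_tendstoUniformlyOn_of_lipschitzOnWith hΩ hψ_lip hψ_le
  refine ⟨u, fun n => ψ (σ n), hu,
    ⟨fun n => hψ _, fun n x hx => hψ_grad _ x hx ▸ hgrad _ x, hψu⟩, ?_⟩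
  simpa only [Function.comp_def, hfψ] using hlim.comp hσ.tendsto_atTop

open Classical in
/-- Capping at `W1 f` is inactive when the approximating sequences obey the gradient bound on all
of `ℝ^N` (`MemX0.apply_le_W1`), and keeps the junk value below `W1 f` for the other `u`. -/
def lipPairing (Ω : Set (Euc N)) (f : (Euc N → ℝ) →ₗ[ℝ] ℝ) (u : Euc N → ℝ) : ℝ :=
  if h : ∃ φ, IsLipApprox Ω u φ then min (limUnder atTop fun n => f (h.choose n)) (W1 f)
  else W1 f

theorem lipPairing_le_W1 {u : Euc N → ℝ} : lipPairing Ω f u ≤ W1 f := by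
  unfold lipPairing
  split_ifs
  exacts [min_le_right _ _, le_rfl]

theorem IsLipApprox.lipPairing_eq (hf : MemX0sharp Ω f) {u : Euc N → ℝ} {φ : ℕ → Euc N → ℝ}
    {r : ℝ} (hφ : IsLipApprox Ω u φ) (hr : Tendsto (fun n => f (φ n)) atTop (𝓝 r))
    (hrW : r ≤ W1 f) : lipPairing Ω f u = r := by
  have h : ∃ φ, IsLipApprox Ω u φ := ⟨φ, hφ⟩
  have hchoose : Tendsto (fun n => f (h.choose n)) atTop (𝓝 r) := by
    simpa using (h.choose_spec.tendsto_apply_sub hf hφ).add hr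
  rw [lipPairing, dif_pos h, hchoose.limUnder_eq, min_eq_left hrW]

end

theorem statement6_general {N : ℕ} (Ω : Set (Euc N)) (hΩcomp : IsCompact Ω)
    (f : (Euc N → ℝ) →ₗ[ℝ] ℝ) (hf : MemX0sharp Ω f) :
    ∃ L : (Euc N → ℝ) → ℝ,
      (∀ u : Euc N → ℝ, LipschitzOnWith 1 u Ω →
        ∀ φ : ℕ → Euc N → ℝ,
          (∀ n, IsTest (φ n)) → (∀ n x, ‖gradient (φ n) x‖ ≤ 1) →
          TendstoUniformlyOn φ u atTop Ω →
          Tendsto (fun n => f (φ n)) atTop (𝓝 (L u))) ∧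
      ∃ u₀ : Euc N → ℝ, LipschitzOnWith 1 u₀ Ω ∧
        (∀ u : Euc N → ℝ, LipschitzOnWith 1 u Ω → L u ≤ L u₀) ∧
        L u₀ = W1 f := by
  refine ⟨lipPairing Ω f, fun u _ φ hφ hgrad hlim => ?_, ?_⟩
  · have happrox : IsLipApprox Ω u φ := ⟨hφ, fun n x _ => hgrad n x, hlim⟩
    obtain ⟨r, hr⟩ := happrox.exists_tendsto hf
    have hrW : r ≤ W1 f :=
      le_of_tendsto' hr fun n => hf.1.apply_le_W1 hΩcomp.isBounded (hφ n) (hgrad n)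
    rwa [happrox.lipPairing_eq hf hr hrW]
  · obtain ⟨u₀, φ, hu₀, hφ, hlim⟩ := hf.1.exists_isLipApprox_tendsto_W1 hΩcomp
    have hL : lipPairing Ω f u₀ = W1 f := hφ.lipPairing_eq hf hlim le_rfl
    exact ⟨u₀, hu₀, fun u _ => hL ▸ lipPairing_le_W1, hL⟩

/-- For `f ∈ X₀^♯(Ω)` there is a pairing `L` extending `f` to
1-Lipschitz functions on `Ω`: for every 1-Lipschitz `u` and every sequence of test
functions `φ_n` with `‖∇φ_n‖_∞ ≤ 1` converging uniformly on `Ω` to `u`, the values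
`⟨f, φ_n⟩` converge to `L u` (so the limit exists and depends only on `u`); moreover the
supremum of `L u` over 1-Lipschitz functions `u` is attained and equals `W¹(f)`. -/
theorem statement6 {N : ℕ} (Ω : Set (Euc N)) (hΩconv : Convex ℝ Ω) (hΩcomp : IsCompact Ω)
    (f : (Euc N → ℝ) →ₗ[ℝ] ℝ) (hf : MemX0sharp Ω f) :
    ∃ L : (Euc N → ℝ) → ℝ,
      (∀ u : Euc N → ℝ, LipschitzOnWith 1 u Ω →
        ∀ φ : ℕ → Euc N → ℝ,
          (∀ n, IsTest (φ n)) → (∀ n x, ‖gradient (φ n) x‖ ≤ 1) →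
          TendstoUniformlyOn φ u atTop Ω →
          Tendsto (fun n => f (φ n)) atTop (𝓝 (L u))) ∧
      ∃ u₀ : Euc N → ℝ, LipschitzOnWith 1 u₀ Ω ∧
        (∀ u : Euc N → ℝ, LipschitzOnWith 1 u Ω → L u ≤ L u₀) ∧
        L u₀ = W1 f :=
  statement6_general Ω hΩcomp f hf
end
end

section
/- Let X and Y be separable real normed spaces with Y ⊆ X, the inclusion being linear, continuous and with dense image. Assume there is a sequence of bounded linear operators T_n : X → Y with sup_n ‖T_n‖_{L(X,Y)} < ∞ and ‖T_n u − u‖_X → 0 for every u ∈ Y. Then Y^# coincides with the closure, in the dual space Y' with its operator norm, of the set of functionals obtained by restricting elements of X' to Y. -/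
open Filter Topology

noncomputable section

/-- `f ∈ Y^#`: for every `ε > 0` there is `C_ε > 0` with
`|⟨f,u⟩| ≤ C_ε ‖u‖_X + ε ‖u‖_Y` for all `u ∈ Y` (the `X`-norm of `u` being `‖j u‖`). -/
def MemSharp {X Y : Type*} [NormedAddCommGroup X] [NormedSpace ℝ X]
    [NormedAddCommGroup Y] [NormedSpace ℝ Y] (j : Y →L[ℝ] X) (f : Y →L[ℝ] ℝ) : Prop :=
  ∀ ε : ℝ, 0 < ε → ∃ C : ℝ, 0 < C ∧ ∀ u : Y, |f u| ≤ C * ‖j u‖ + ε * ‖u‖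

/-- If `Y ⊆ X` are separable normed spaces (inclusion `j` linear,
continuous, injective and with dense image) and there are uniformly bounded operators
`T_n : X → Y` with `‖T_n u − u‖_X → 0` for every `u ∈ Y`, then `Y^#` is exactly the
closure in `Y'` (operator norm) of the restrictions to `Y` of elements of `X'`. -/
theorem statement13 {X Y : Type*} [NormedAddCommGroup X] [NormedSpace ℝ X]
    [NormedAddCommGroup Y] [NormedSpace ℝ Y]
    [TopologicalSpace.SeparableSpace X] [TopologicalSpace.SeparableSpace Y]
    (j : Y →L[ℝ] X) (hinj : Function.Injective j) (hdense : DenseRange j)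
    (T : ℕ → X →L[ℝ] Y) (hbd : ∃ C : ℝ, ∀ n, ‖T n‖ ≤ C)
    (happrox : ∀ u : Y, Tendsto (fun n => ‖j (T n (j u)) - j u‖) atTop (𝓝 0))
    (f : Y →L[ℝ] ℝ) :
    MemSharp j f ↔ f ∈ closure (Set.range fun g : X →L[ℝ] ℝ => g.comp j) := by
  constructor
  · -- hard direction: via Hahn–Banach splitting
    intro hf
    rw [Metric.mem_closure_iff]
    intro ε hε
    obtain ⟨C, hC, hfC⟩ := hf (ε / 2) (by linarith)
    set φ : Y →ₗ[ℝ] X × Y := (j.toLinearMap).prod LinearMap.id with hφ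
    set W : Submodule ℝ (X × Y) := LinearMap.range φ with hW
    set F : (X × Y) →ₗ.[ℝ] ℝ :=
      ⟨W, f.toLinearMap ∘ₗ LinearMap.snd ℝ X Y ∘ₗ W.subtype⟩ with hF
    set N : X × Y → ℝ := fun p => C * ‖p.1‖ + (ε / 2) * ‖p.2‖ with hN
    have hN1 : ∀ c : ℝ, 0 < c → ∀ p, N (c • p) = c * N p := by
      intro c hc p
      simp only [hN, Prod.smul_fst, Prod.smul_snd, norm_smul, Real.norm_eq_abs,
        abs_of_pos hc]
      ring
    have hN2 : ∀ p q, N (p + q) ≤ N p + N q := by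
      intro p q
      have h1 := norm_add_le p.1 q.1
      have h2 := norm_add_le p.2 q.2
      simp only [hN, Prod.fst_add, Prod.snd_add]
      nlinarith
    have hNneg : ∀ p, N (-p) = N p := by
      intro p; simp [hN]
    have hfN : ∀ x : F.domain, F x ≤ N x := by
      rintro ⟨p, u, rfl⟩
      show f u ≤ C * ‖j u‖ + ε / 2 * ‖u‖
      exact (le_abs_self _).trans (hfC u)
    obtain ⟨G, hG1, hG2⟩ := exists_extension_of_le_sublinear F N hN1 hN2 hfN
    have hGabs : ∀ p, |G p| ≤ N p := by
      intro p
      rw [abs_le]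
      constructor
      · have := hG2 (-p)
        rw [map_neg, hNneg] at this
        linarith
      · exact hG2 p
    -- the X' functional
    set g₀ : X →ₗ[ℝ] ℝ := G ∘ₗ LinearMap.inl ℝ X Y with hg₀
    have hg₀bd : ∀ x : X, ‖g₀ x‖ ≤ C * ‖x‖ := by
      intro x
      have := hGabs (x, 0)
      simpa [hg₀, hN] using this
    set g : X →L[ℝ] ℝ := g₀.mkContinuous C hg₀bd with hg
    refine ⟨g.comp j, ⟨g, rfl⟩, ?_⟩
    have key : ∀ u : Y, f u - g (j u) = G (0, u) := by
      intro u
      have hmem : φ u ∈ W := ⟨u, rfl⟩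
      have hfu : f u = G (φ u) := by
        have := hG1 ⟨φ u, hmem⟩
        rw [this]; rfl
      have hφu : φ u = (j u, u) := rfl
      have hgju : g (j u) = G (j u, 0) := rfl
      rw [hfu, hgju, hφu]
      have : ((j u, u) : X × Y) = (j u, 0) + (0, u) := by simp
      rw [this, map_add]; ring
    have hdist : dist f (g.comp j) ≤ ε / 2 := by
      rw [dist_eq_norm]
      refine ContinuousLinearMap.opNorm_le_bound _ (by linarith) ?_
      intro u
      have := hGabs (0, u)
      simp only [hN, norm_zero, mul_zero, zero_add] at this
      have heq : (f - g.comp j) u = G (0, u) := by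
        simp only [ContinuousLinearMap.sub_apply, ContinuousLinearMap.comp_apply]
        exact key u
      rw [heq]
      simpa using this
    linarith [hdist]
  · -- easy direction
    intro hf ε hε
    rw [Metric.mem_closure_iff] at hf
    obtain ⟨h, ⟨g, rfl⟩, hdist⟩ := hf ε hε
    refine ⟨‖g‖ + 1, by positivity, fun u => ?_⟩
    have h1 : |f u - g (j u)| ≤ ε * ‖u‖ := by
      have : ‖(f - g.comp j) u‖ ≤ ‖f - g.comp j‖ * ‖u‖ :=
        (f - g.comp j).le_opNorm u
      rw [dist_eq_norm] at hdist
      calc |f u - g (j u)| = ‖(f - g.comp j) u‖ := by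
            simp [ContinuousLinearMap.sub_apply]
        _ ≤ ‖f - g.comp j‖ * ‖u‖ := this
        _ ≤ ε * ‖u‖ := by
            apply mul_le_mul_of_nonneg_right hdist.le (norm_nonneg u)
    have h2 : |g (j u)| ≤ ‖g‖ * ‖j u‖ := g.le_opNorm (j u)
    calc |f u| = |(f u - g (j u)) + g (j u)| := by ring_nf
      _ ≤ |f u - g (j u)| + |g (j u)| := abs_add_le _ _
      _ ≤ ε * ‖u‖ + ‖g‖ * ‖j u‖ := add_le_add h1 h2
      _ ≤ (‖g‖ + 1) * ‖j u‖ + ε * ‖u‖ := by nlinarith [norm_nonneg (j u)]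
end
end

section
/- Let X and Y be separable real normed spaces with Y ⊆ X, the inclusion being linear, continuous and compact (every bounded sequence in Y has a subsequence converging in X), and assume the Y-norm is lower semicontinuous with respect to X-convergence (if u_n ∈ Y, u_n → u in X and ‖u_n‖_Y ≤ c for all n, then u ∈ Y and ‖u‖_Y ≤ c). Then for every f ∈ Y^# the supremum sup{⟨f,u⟩ : u ∈ Y, ‖u‖_Y ≤ 1} is attained by some u ∈ Y with ‖u‖_Y ≤ 1. -/
open Filter Topology

noncomputable section

/-- If the inclusion `j : Y → X` is compact and the `Y`-norm is lower
semicontinuous along `X`-convergence, then for every `f ∈ Y^#` the supremum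
`sup {⟨f,u⟩ : ‖u‖_Y ≤ 1}` is attained. -/
theorem statement14 {X Y : Type*} [NormedAddCommGroup X] [NormedSpace ℝ X]
    [NormedAddCommGroup Y] [NormedSpace ℝ Y]
    [TopologicalSpace.SeparableSpace X] [TopologicalSpace.SeparableSpace Y]
    (j : Y →L[ℝ] X) (hinj : Function.Injective j)
    (hcompact : ∀ u : ℕ → Y, (∃ C : ℝ, ∀ n, ‖u n‖ ≤ C) →
      ∃ (x : X) (k : ℕ → ℕ), StrictMono k ∧
        Tendsto (fun i => j (u (k i))) atTop (𝓝 x))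
    (hlsc : ∀ (u : ℕ → Y) (x : X) (c : ℝ), (∀ n, ‖u n‖ ≤ c) →
      Tendsto (fun n => j (u n)) atTop (𝓝 x) → ∃ y : Y, j y = x ∧ ‖y‖ ≤ c)
    (f : Y →L[ℝ] ℝ) (hf : MemSharp j f) :
    ∃ u : Y, ‖u‖ ≤ 1 ∧ ∀ u' : Y, ‖u'‖ ≤ 1 → f u' ≤ f u := by
  set A : Set ℝ := (fun u : Y => f u) '' {u : Y | ‖u‖ ≤ 1} with hA
  have h0A : (0 : ℝ) ∈ A := ⟨0, by simp, by simp⟩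
  have hbdd : BddAbove A := by
    obtain ⟨C, hC, hCle⟩ := hf 1 one_pos
    refine ⟨C * ‖j‖ + 1, ?_⟩
    rintro r ⟨u, hu, rfl⟩
    calc f u ≤ |f u| := le_abs_self _
      _ ≤ C * ‖j u‖ + 1 * ‖u‖ := hCle u
      _ ≤ C * (‖j‖ * 1) + 1 * 1 := by
          gcongr
          · exact (j.le_opNorm u).trans (by gcongr; exact hu)
          · exact hu
      _ = C * ‖j‖ + 1 := by ring
  set S := sSup A with hS
  have hseq : ∀ n : ℕ, ∃ u : Y, ‖u‖ ≤ 1 ∧ S - 1 / (n + 1) < f u := by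
    intro n
    have : S - 1 / (n + 1) < S := by
      have : (0 : ℝ) < 1 / (n + 1) := by positivity
      linarith
    obtain ⟨r, hrA, hr⟩ := exists_lt_of_lt_csSup ⟨0, h0A⟩ this
    obtain ⟨u, hu, rfl⟩ := hrA
    exact ⟨u, hu, hr⟩
  choose u hu1 hu2 using hseq
  obtain ⟨x, k, hk, hconv⟩ := hcompact u ⟨1, hu1⟩
  obtain ⟨y, hjy, hy1⟩ := hlsc (fun i => u (k i)) x 1 (fun i => hu1 _) hconv
  refine ⟨y, hy1, ?_⟩
  have hSy : S ≤ f y := by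
    refine le_of_forall_pos_le_add fun ε hε => ?_
    obtain ⟨C, hC, hCle⟩ := hf (ε / 4) (by positivity)
    have hnorm0 : Tendsto (fun i => ‖j (u (k i)) - x‖) atTop (𝓝 0) := by
      simpa using (tendsto_sub_nhds_zero_iff.mpr hconv).norm
    have hinv0 : Tendsto (fun i : ℕ => 1 / ((k i : ℝ) + 1)) atTop (𝓝 0) := by
      refine tendsto_of_tendsto_of_tendsto_of_le_of_le (g := fun _ => (0:ℝ))
        (h := fun i : ℕ => 1 / ((i : ℝ) + 1)) tendsto_const_nhds
        tendsto_one_div_add_atTop_nhds_zero_nat (fun i => by positivity) fun i => by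
          apply div_le_div_of_nonneg_left one_pos.le (by positivity)
          have h' : (i : ℝ) ≤ k i := Nat.cast_le.mpr hk.le_apply
          linarith
    have hb : Tendsto (fun i => f y + C * ‖j (u (k i)) - x‖ + ε / 2 + 1 / ((k i : ℝ) + 1))
        atTop (𝓝 (f y + C * 0 + ε / 2 + 0)) := by
      exact (((tendsto_const_nhds.add (hnorm0.const_mul C)).add tendsto_const_nhds).add hinv0)
    have hle : ∀ i, S ≤ f y + C * ‖j (u (k i)) - x‖ + ε / 2 + 1 / ((k i : ℝ) + 1) := by
      intro i
      have h1 : f (u (k i)) - f y ≤ C * ‖j (u (k i)) - x‖ + ε / 2 := by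
        have := hCle (u (k i) - y)
        rw [map_sub, map_sub, hjy] at this
        have habs : f (u (k i)) - f y ≤ |f (u (k i)) - f y| := le_abs_self _
        have hnle : ‖u (k i) - y‖ ≤ 2 := by
          calc ‖u (k i) - y‖ ≤ ‖u (k i)‖ + ‖y‖ := norm_sub_le _ _
            _ ≤ 1 + 1 := add_le_add (hu1 _) hy1
            _ = 2 := by norm_num
        nlinarith [this, habs]
      have h2 := hu2 (k i)
      push_cast at h2 ⊢
      linarith
    have := ge_of_tendsto' hb hle
    simpa using this.trans (by linarith)
  intro u' hu'
  exact (le_csSup hbdd ⟨u', hu', rfl⟩).trans hSy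
end
end

section
/- Let X and Y be real normed spaces with Y ⊆ X and continuous inclusion, and let f ∈ Y'. Then f ∈ Y^# if and only if ⟨f,u_n⟩ → 0 for every sequence u_n ∈ Y with u_n → 0 in X and sup_n ‖u_n‖_Y < ∞. -/
open Filter Topology

noncomputable section

/-- `f ∈ Y^#` if and only if `⟨f, u_n⟩ → 0` for every sequence
`u_n ∈ Y` with `u_n → 0` in `X` and `sup_n ‖u_n‖_Y < ∞`. -/
theorem statement15 {X Y : Type*} [NormedAddCommGroup X] [NormedSpace ℝ X]
    [NormedAddCommGroup Y] [NormedSpace ℝ Y]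
    (j : Y →L[ℝ] X) (hinj : Function.Injective j)
    (f : Y →L[ℝ] ℝ) :
    MemSharp j f ↔
      ∀ u : ℕ → Y, Tendsto (fun n => j (u n)) atTop (𝓝 0) →
        (∃ C : ℝ, ∀ n, ‖u n‖ ≤ C) →
        Tendsto (fun n => f (u n)) atTop (𝓝 0) := by
  constructor
  · intro hf u hX hB
    obtain ⟨C, hC⟩ := hB
    have hC0 : 0 ≤ C := le_trans (norm_nonneg _) (hC 0)
    rw [NormedAddCommGroup.tendsto_nhds_zero] at hX ⊢
    intro ε hε
    have hδ : 0 < ε / (2 * (C + 1)) := by positivity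
    obtain ⟨K, hK, hKu⟩ := hf (ε / (2 * (C + 1))) hδ
    have h1 : ∀ᶠ n in atTop, ‖j (u n)‖ < ε / (2 * K) := hX _ (by positivity)
    filter_upwards [h1] with n hn
    have hb1 : K * ‖j (u n)‖ < ε / 2 := by
      have := (mul_lt_mul_iff_right₀ hK).2 hn
      calc K * ‖j (u n)‖ < K * (ε / (2 * K)) := this
        _ = ε / 2 := by field_simp
    have hb2 : ε / (2 * (C + 1)) * ‖u n‖ ≤ ε / 2 := by
      calc ε / (2 * (C + 1)) * ‖u n‖ ≤ ε / (2 * (C + 1)) * (C + 1) := by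
            have := (hC n).trans (by linarith : C ≤ C + 1)
            exact mul_le_mul_of_nonneg_left this (le_of_lt hδ)
        _ = ε / 2 := by field_simp
    calc ‖f (u n)‖ = |f (u n)| := rfl
      _ ≤ K * ‖j (u n)‖ + ε / (2 * (C + 1)) * ‖u n‖ := hKu (u n)
      _ < ε / 2 + ε / 2 := by linarith
      _ = ε := by ring
  · intro h ε hε
    by_contra hcon
    push_neg at hcon
    choose u hu using fun n : ℕ => hcon ((n : ℝ) + 1) (by positivity)
    have hfu : ∀ n, 0 < |f (u n)| := fun n =>
      lt_of_le_of_lt (by positivity) (hu n)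
    set v : ℕ → Y := fun n => (|f (u n)|)⁻¹ • u n with hv
    have hfv : ∀ n, |f (v n)| = 1 := by
      intro n
      simp only [hv, map_smul, smul_eq_mul, abs_mul, abs_inv, abs_abs]
      exact inv_mul_cancel₀ (hfu n).ne'
    have hvnorm : ∀ n, ‖v n‖ ≤ ε⁻¹ := by
      intro n
      have h1 : ε * ‖u n‖ ≤ |f (u n)| := le_of_lt (lt_of_le_of_lt
        (le_add_of_nonneg_left (by positivity)) (hu n))
      have h2 : ‖v n‖ = (|f (u n)|)⁻¹ * ‖u n‖ := by
        simp [hv, norm_smul, abs_inv]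
      rw [h2, inv_mul_le_iff₀ (hfu n), ← div_eq_mul_inv, le_div_iff₀ hε]
      nlinarith
    have hjv : ∀ n : ℕ, ‖j (v n)‖ ≤ ((n : ℝ) + 1)⁻¹ := by
      intro n
      have h1 : ((n : ℝ) + 1) * ‖j (u n)‖ ≤ |f (u n)| := le_of_lt
        (lt_of_le_of_lt (le_add_of_nonneg_right (by positivity)) (hu n))
      have h2 : ‖j (v n)‖ = (|f (u n)|)⁻¹ * ‖j (u n)‖ := by
        simp [hv, norm_smul, abs_inv]
      have hn1 : (0:ℝ) < (n : ℝ) + 1 := by positivity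
      rw [h2, inv_mul_le_iff₀ (hfu n), ← div_eq_mul_inv, le_div_iff₀ hn1]
      nlinarith
    have hjv0 : Tendsto (fun n => j (v n)) atTop (𝓝 0) := by
      rw [NormedAddCommGroup.tendsto_nhds_zero]
      intro δ hδ
      have : Tendsto (fun n : ℕ => ((n : ℝ) + 1)⁻¹) atTop (𝓝 0) :=
        tendsto_one_div_add_atTop_nhds_zero_nat.congr (by intro n; simp [one_div])
      filter_upwards [(this.eventually (gt_mem_nhds hδ))] with n hn
      exact lt_of_le_of_lt (hjv n) hn
    have hfv0 := h v hjv0 ⟨ε⁻¹, hvnorm⟩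
    rw [NormedAddCommGroup.tendsto_nhds_zero] at hfv0
    obtain ⟨n, hn⟩ := (hfv0 1 one_pos).exists
    rw [Real.norm_eq_abs, hfv n] at hn
    exact lt_irrefl 1 hn
end
end
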